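/- arXiv:1208.1732 — 3 statements merged into one kernel-verified Lean document; each statement's English description precedes it below -/
import Mathlib

section
/- For any connected graph G on at least 2 vertices and any graph H, r(G,H) ≥ (|V(G)|−1)(χ(H)−1) + σ(H), where σ(H) is the minimum size of a color class over all proper vertex colorings of H using exactly χ(H) colors. -/
/-- `N` has the Ramsey property for `(G, H)`: every red/blue edge-coloring of `K_N`
(red graph `R`, blue graph `Rᶜ`) contains a red copy of `G` or a blue copy of `H`. -/
def RamseyProp {α β : Type} (G : SimpleGraph α) (H : SimpleGraph β) (N : ℕ) : Prop :=
  ∀ R : SimpleGraph (Fin N),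
    (∃ f : α → Fin N, Function.Injective f ∧ ∀ u v, G.Adj u v → R.Adj (f u) (f v)) ∨
    (∃ g : β → Fin N, Function.Injective g ∧ ∀ u v, H.Adj u v → Rᶜ.Adj (g u) (g v))

theorem stmt1 {α β : Type} [Fintype α] [Fintype β]
    (G : SimpleGraph α) (H : SimpleGraph β)
    (hG : G.Connected) (hα : 2 ≤ Fintype.card α)
    (c σ : ℕ) (hc : H.chromaticNumber = c)
    (hσ : IsLeast {m : ℕ | ∃ C : H.Coloring (Fin c), Function.Surjective C ∧
        (∃ i : Fin c, m = (Finset.univ.filter fun v => C v = i).card) ∧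
        ∀ i : Fin c, m ≤ (Finset.univ.filter fun v => C v = i).card} σ) :
    ∀ N : ℕ, RamseyProp G H N → (Fintype.card α - 1) * (c - 1) + σ ≤ N := by
  obtain ⟨⟨C0, hC0surj, ⟨i0, hi0⟩, hC0all⟩, hlb⟩ := hσ
  have hc1 : 1 ≤ c := i0.pos
  have hσ1 : 1 ≤ σ := by
    obtain ⟨v, hv⟩ := hC0surj i0
    rw [hi0]
    exact Finset.card_pos.mpr ⟨v, by simp [hv]⟩
  obtain ⟨c', rfl⟩ : ∃ c', c = c' + 1 := ⟨c - 1, by omega⟩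
  obtain ⟨k, hk1, hk⟩ : ∃ k, 1 ≤ k ∧ Fintype.card α - 1 = k :=
    ⟨Fintype.card α - 1, by omega, rfl⟩
  -- card β ≥ c * σ
  have hβ : (c' + 1) * σ ≤ Fintype.card β := by
    have hsum : ∑ i : Fin (c' + 1), (Finset.univ.filter fun v => C0 v = i).card
        = Fintype.card β := by
      rw [← Finset.card_univ]
      exact (Finset.card_eq_sum_card_fiberwise (f := C0) (s := Finset.univ)
        (t := Finset.univ) (by simp)).symm
    calc (c' + 1) * σ = ∑ _i : Fin (c' + 1), σ := by
          simp [mul_comm]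
      _ ≤ ∑ i : Fin (c' + 1), (Finset.univ.filter fun v => C0 v = i).card :=
          Finset.sum_le_sum fun i _ => hC0all i
      _ = Fintype.card β := hsum
  intro N hRam
  by_contra hNlt
  push_neg at hNlt
  rw [hk] at hNlt
  simp only [Nat.add_sub_cancel] at hNlt
  rcases le_or_gt σ (Fintype.card α) with hcase | hcase
  · -- construction case: σ ≤ n
    obtain ⟨s, rfl⟩ : ∃ s, σ = s + 1 := ⟨σ - 1, by omega⟩
    have hsk : s ≤ k := by omega
    have hNle : N ≤ k * c' + s := by omega
    -- block bound: each block has at most k elements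
    have hblock : ∀ b : ℕ,
        (Finset.univ.filter fun x : Fin N => (x : ℕ) / k = b).card ≤ k := by
      intro b
      have hinj : Set.InjOn (fun x : Fin N => (x : ℕ) % k)
          ↑(Finset.univ.filter fun x : Fin N => (x : ℕ) / k = b) := by
        intro x hx y hy hxy
        simp only [Finset.coe_filter, Set.mem_setOf_eq] at hx hy
        have hxy' : (x : ℕ) % k = (y : ℕ) % k := hxy
        have h1 := Nat.div_add_mod (x : ℕ) k
        have h2 := Nat.div_add_mod (y : ℕ) k
        have h3 := hx.2
        have h4 := hy.2
        have h5 : k * ((x : ℕ) / k) = k * ((y : ℕ) / k) := by rw [h3, h4]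
        exact Fin.ext (by omega)
      calc (Finset.univ.filter fun x : Fin N => (x : ℕ) / k = b).card
          ≤ (Finset.range k).card := Finset.card_le_card_of_injOn _
            (fun x _ => Finset.mem_range.mpr (Nat.mod_lt _ (by omega))) hinj
        _ = k := Finset.card_range k
    -- last block has at most s elements
    have hlast : (Finset.univ.filter fun x : Fin N => (x : ℕ) / k = c').card ≤ s := by
      have hlow : ∀ x : Fin N, (x : ℕ) / k = c' → c' * k ≤ (x : ℕ) := by
        intro x hx
        have := Nat.div_mul_le_self (x : ℕ) k
        rw [hx] at this; exact this
      have hinj : Set.InjOn (fun x : Fin N => (x : ℕ) - c' * k)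
          ↑(Finset.univ.filter fun x : Fin N => (x : ℕ) / k = c') := by
        intro x hx y hy hxy
        simp only [Finset.coe_filter, Set.mem_setOf_eq] at hx hy
        have hxy' : (x : ℕ) - c' * k = (y : ℕ) - c' * k := hxy
        have h1 := hlow x hx.2
        have h2 := hlow y hy.2
        exact Fin.ext (by omega)
      calc (Finset.univ.filter fun x : Fin N => (x : ℕ) / k = c').card
          ≤ (Finset.range s).card := Finset.card_le_card_of_injOn _
            (fun x hx => by
              simp only [Finset.mem_coe, Finset.mem_filter] at hx
              have h1 := hlow x hx.2
              have h2 : (x : ℕ) < N := x.2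
              have h3 : c' * k = k * c' := Nat.mul_comm _ _
              exact Finset.mem_range.mpr (by omega)) hinj
        _ = s := Finset.card_range s
    rcases hRam (SimpleGraph.fromRel fun x y => (x : ℕ) / k = (y : ℕ) / k) with
      ⟨f, hfinj, hf⟩ | ⟨g, hginj, hgadj⟩
    · -- red copy of G: impossible since components have ≤ k < card α vertices
      have hcomp : ∀ u v : α, G.Reachable u v → (f u : ℕ) / k = (f v : ℕ) / k := by
        intro u v ⟨w⟩
        induction w with
        | nil => rfl
        | cons h w ih =>
          have hadj := hf _ _ h
          rw [SimpleGraph.fromRel_adj] at hadj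
          rcases hadj.2 with h' | h'
          · rw [h']; exact ih
          · rw [← h']; exact ih
      have hne : Nonempty α := Fintype.card_pos_iff.mp (by omega)
      obtain ⟨u0⟩ := hne
      have hsub : Finset.univ.image f ⊆
          Finset.univ.filter fun x : Fin N => (x : ℕ) / k = (f u0 : ℕ) / k := by
        intro x hx
        obtain ⟨u, -, rfl⟩ := Finset.mem_image.mp hx
        exact Finset.mem_filter.mpr ⟨Finset.mem_univ _, hcomp u u0 (hG.preconnected u u0)⟩
      have hcard : Fintype.card α ≤ k := by
        calc Fintype.card α = (Finset.univ.image f).card := by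
              rw [Finset.card_image_of_injective _ hfinj, Finset.card_univ]
          _ ≤ _ := Finset.card_le_card hsub
          _ ≤ k := hblock _
      omega
    · -- blue copy of H: gives a proper coloring, contradiction
      have hglt : ∀ v : β, ((g v : ℕ)) / k < c' + 1 := by
        intro v
        have h1 : (g v : ℕ) < N := (g v).2
        have h2 : k * (c' + 1) = k * c' + k := by ring
        apply Nat.div_lt_of_lt_mul
        omega
      set C : H.Coloring (Fin (c' + 1)) := SimpleGraph.Coloring.mk
        (fun v => ⟨(g v : ℕ) / k, hglt v⟩)
        (by
          intro u v h hC
          have hblue := hgadj u v h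
          rw [SimpleGraph.compl_adj] at hblue
          have : (g u : ℕ) / k = (g v : ℕ) / k := congrArg Fin.val hC
          exact hblue.2 ((SimpleGraph.fromRel_adj _ _ _).mpr ⟨hblue.1, Or.inl this⟩)) with hCdef
      have hCval : ∀ v : β, (C v : ℕ) = (g v : ℕ) / k := fun v => rfl
      -- class card ≤ block card
      have hclass : ∀ i : Fin (c' + 1),
          (Finset.univ.filter fun v => C v = i).card ≤
          (Finset.univ.filter fun x : Fin N => (x : ℕ) / k = (i : ℕ)).card := by
        intro i
        apply Finset.card_le_card_of_injOn g
        · intro v hv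
          simp only [Finset.mem_coe, Finset.mem_filter] at hv ⊢
          refine ⟨Finset.mem_univ _, ?_⟩
          rw [← hCval v, hv.2]
        · intro x _ y _ hxy
          exact hginj hxy
      by_cases hsurj : Function.Surjective C
      · -- surjective: min class is in the set, but last class has ≤ s < σ elements
        obtain ⟨im, -, him⟩ := Finset.exists_min_image Finset.univ
          (fun i => (Finset.univ.filter fun v => C v = i).card)
          ⟨0, Finset.mem_univ 0⟩
        have hmem : (Finset.univ.filter fun v => C v = im).card ∈
            {m : ℕ | ∃ C : H.Coloring (Fin (c' + 1)), Function.Surjective C ∧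
              (∃ i : Fin (c' + 1), m = (Finset.univ.filter fun v => C v = i).card) ∧
              ∀ i : Fin (c' + 1), m ≤ (Finset.univ.filter fun v => C v = i).card} :=
          ⟨C, hsurj, ⟨im, rfl⟩, fun i => him i (Finset.mem_univ i)⟩
        have h1 := hlb hmem
        have h2 := him ⟨c', by omega⟩ (Finset.mem_univ _)
        have h3 : (Finset.univ.filter fun v => C v = (⟨c', by omega⟩ : Fin (c' + 1))).card
            ≤ s := le_trans (hclass _) hlast
        omega
      · -- not surjective: H is (c)-chromatic but colorable with c-1 colors
        obtain ⟨i, hi'⟩ : ∃ i : Fin (c' + 1), ∀ v, C v ≠ i := by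
          by_contra h
          push_neg at h
          exact hsurj fun i => h i
        have hcol : H.Colorable (Fintype.card {j : Fin (c' + 1) // j ≠ i}) :=
          (SimpleGraph.Coloring.mk (fun v => (⟨C v, hi' v⟩ : {j : Fin (c' + 1) // j ≠ i}))
            (fun h hne => C.valid h (by
              simpa [Subtype.ext_iff] using hne))).colorable
        have hcard : Fintype.card {j : Fin (c' + 1) // j ≠ i} = c' := by
          simp [Fintype.card_subtype_compl, Fintype.card_subtype_eq]
        rw [hcard] at hcol
        have hle := hcol.chromaticNumber_le
        rw [hc] at hle
        have : c' + 1 ≤ c' := Nat.cast_le.mp hle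
        omega
  · -- size case: σ > n, so card β ≥ c σ > N, no blue copy fits; red graph empty
    rcases hRam ⊥ with ⟨f, hfinj, hf⟩ | ⟨g, hginj, -⟩
    · obtain ⟨u, v, huv⟩ := Fintype.exists_pair_of_one_lt_card (by omega : 1 < Fintype.card α)
      obtain ⟨w⟩ := hG.preconnected u v
      cases w with
      | nil => exact huv rfl
      | cons h _ => exact (hf _ _ h).elim
    · have hNβ : Fintype.card β ≤ N := by simpa using Fintype.card_le_of_injective g hginj
      have h1 : k * c' ≤ σ * c' := Nat.mul_le_mul_right _ (by omega)
      have h2 : (c' + 1) * σ = σ * c' + σ := by ring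
      omega
end

section
/- Let C = (a_1,…,a_d,*,…,*) and C' = (b_1,…,b_{d'},*,…,*) be disjoint special subcubes of Q_n with d' ≤ d. Then there exist vertices x ∈ C and x' ∈ C' adjacent in Q_n if and only if the vectors (a_1,…,a_{d'}) and (b_1,…,b_{d'}) differ in exactly one coordinate. -/
/-- The special subcube of `Q_n` of codimension `d` with fixed prefix `a`. -/
def specialCube {n : ℕ} (d : ℕ) (h : d ≤ n) (a : Fin d → Bool) : Set (Fin n → Bool) :=
  {x | ∀ i : Fin d, x (Fin.castLE h i) = a i}

theorem stmt7 {n d d' : ℕ} (hd : d ≤ n) (hd' : d' ≤ d)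
    (a : Fin d → Bool) (b : Fin d' → Bool)
    (hdisj : Disjoint (specialCube d hd a) (specialCube d' (hd'.trans hd) b)) :
    (∃ x ∈ specialCube d hd a, ∃ y ∈ specialCube d' (hd'.trans hd) b,
        hammingDist x y = 1) ↔
      hammingDist (fun i : Fin d' => a (Fin.castLE hd' i)) b = 1 := by
  have hcast : ∀ i : Fin d', Fin.castLE (hd'.trans hd) i = Fin.castLE hd (Fin.castLE hd' i) := by
    intro i; ext; simp
  constructor
  · rintro ⟨x, hx, y, hy, hxy⟩
    -- the differing coordinate
    rw [hammingDist, Finset.card_eq_one] at hxy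
    obtain ⟨j, hj⟩ := hxy
    -- a' ≠ b : from disjointness
    have hne : ∃ i : Fin d', a (Fin.castLE hd' i) ≠ b i := by
      by_contra h
      push_neg at h
      have : x ∈ specialCube d' (hd'.trans hd) b := by
        intro i
        rw [hcast i, hx (Fin.castLE hd' i), h i]
      exact absurd (hdisj.ne_of_mem hx this) (fun h => h rfl)
    obtain ⟨i0, hi0⟩ := hne
    have hxyi0 : x (Fin.castLE (hd'.trans hd) i0) ≠ y (Fin.castLE (hd'.trans hd) i0) := by
      rw [hy i0, hcast i0, hx (Fin.castLE hd' i0)]; exact hi0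
    have hj0 : Fin.castLE (hd'.trans hd) i0 = j := by
      have hmem : Fin.castLE (hd'.trans hd) i0 ∈
          Finset.filter (fun i => x i ≠ y i) Finset.univ :=
        Finset.mem_filter.mpr ⟨Finset.mem_univ _, hxyi0⟩
      rw [hj, Finset.mem_singleton] at hmem; exact hmem
    rw [hammingDist, Finset.card_eq_one]
    refine ⟨i0, ?_⟩
    ext i
    simp only [Finset.mem_filter, Finset.mem_univ, true_and, Finset.mem_singleton]
    constructor
    · intro hi
      have : x (Fin.castLE (hd'.trans hd) i) ≠ y (Fin.castLE (hd'.trans hd) i) := by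
        rw [hy i, hcast i, hx (Fin.castLE hd' i)]; exact hi
      have hmem : Fin.castLE (hd'.trans hd) i ∈
          Finset.filter (fun k => x k ≠ y k) Finset.univ :=
        Finset.mem_filter.mpr ⟨Finset.mem_univ _, this⟩
      rw [hj, Finset.mem_singleton, ← hj0] at hmem
      exact Fin.castLE_injective _ hmem
    · rintro rfl; exact hi0
  · intro h
    rw [hammingDist, Finset.card_eq_one] at h
    obtain ⟨j, hj⟩ := h
    have hdiff : ∀ i : Fin d', (a (Fin.castLE hd' i) ≠ b i) ↔ i = j := by
      intro i
      constructor
      · intro hi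
        have hmem : i ∈ Finset.filter
            (fun k : Fin d' => (fun i : Fin d' => a (Fin.castLE hd' i)) k ≠ b k)
            Finset.univ :=
          Finset.mem_filter.mpr ⟨Finset.mem_univ i, hi⟩
        rwa [hj, Finset.mem_singleton] at hmem
      · rintro rfl
        have hjmem : i ∈ Finset.filter
            (fun k : Fin d' => (fun i : Fin d' => a (Fin.castLE hd' i)) k ≠ b k)
            Finset.univ := by
          rw [hj]; exact Finset.mem_singleton_self i
        exact (Finset.mem_filter.mp hjmem).2
    set x : Fin n → Bool := fun i => if h : i.val < d then a ⟨i.val, h⟩ else false with hxdef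
    have hx : x ∈ specialCube d hd a := by
      intro i
      simp only [hxdef, Fin.coe_castLE, i.isLt, dif_pos]
    set y : Fin n → Bool := Function.update x (Fin.castLE (hd'.trans hd) j) (b j) with hydef
    have hxj : x (Fin.castLE (hd'.trans hd) j) = a (Fin.castLE hd' j) := by
      rw [hcast j]; exact hx _
    refine ⟨x, hx, y, ?_, ?_⟩
    · intro i
      rcases eq_or_ne i j with rfl | hij
      · simp [hydef]
      · have : Fin.castLE (hd'.trans hd) i ≠ Fin.castLE (hd'.trans hd) j :=
          fun h => hij (Fin.castLE_injective _ h)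
        rw [hydef, Function.update_of_ne this, hcast i, hx (Fin.castLE hd' i)]
        by_contra hne
        exact hij ((hdiff i).mp hne)
    · rw [hammingDist, Finset.card_eq_one]
      refine ⟨Fin.castLE (hd'.trans hd) j, ?_⟩
      ext i
      simp only [Finset.mem_filter, Finset.mem_univ, true_and, Finset.mem_singleton]
      constructor
      · intro hi
        by_contra hne
        rw [hydef, Function.update_of_ne hne] at hi
        exact hi rfl
      · rintro rfl
        rw [hydef, Function.update_self, hxj]
        exact (hdiff j).mpr rfl
end

section
/- Let 𝒞 be a collection of pairwise disjoint special subcubes of Q_n and let C ∈ 𝒞 have codimension d. Then there are at most d other cubes C' ∈ 𝒞 with codimension d(C') ≤ d that are adjacent to C. -/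
/-- Two subcubes are adjacent if they contain vertices adjacent in `Q_n`,
i.e. at Hamming distance 1. -/
def cubesAdjacent {n : ℕ} (S T : Set (Fin n → Bool)) : Prop :=
  ∃ x ∈ S, ∃ y ∈ T, hammingDist x y = 1

lemma diff_spec {n dk dj : ℕ} (hk : dk ≤ n) (hj : dj ≤ n) (hle : dk ≤ dj)
    {ak : Fin dk → Bool} {aj : Fin dj → Bool}
    (hdisj : Disjoint (specialCube dk hk ak) (specialCube dj hj aj))
    (hadj : cubesAdjacent (specialCube dk hk ak) (specialCube dj hj aj)) :
    ∃ p, p < dk ∧ ∀ q (hq : q < dk),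
      (ak ⟨q, hq⟩ ≠ aj ⟨q, hq.trans_le hle⟩ ↔ q = p) := by
  obtain ⟨x, hx, y, hy, hd⟩ := hadj
  have hdcard : (Finset.univ.filter fun i => x i ≠ y i).card = 1 := hd
  obtain ⟨pp, hpp⟩ := Finset.card_eq_one.mp hdcard
  have hiff : ∀ l : Fin n, x l ≠ y l ↔ l = pp := by
    intro l
    constructor
    · intro h
      have hmem : l ∈ Finset.univ.filter fun i => x i ≠ y i := by simp [h]
      rw [hpp] at hmem; simpa using hmem
    · intro h
      have hmem : l ∈ Finset.univ.filter fun i => x i ≠ y i := by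
        rw [hpp, Finset.mem_singleton]; exact h
      simpa using hmem
  -- there is some difference in the prefix
  have hex : ∃ q, ∃ hq : q < dk, ak ⟨q, hq⟩ ≠ aj ⟨q, hq.trans_le hle⟩ := by
    by_contra h
    push_neg at h
    have hmem : y ∈ specialCube dk hk ak := by
      intro i
      have h1 : y (Fin.castLE hj ⟨i.val, i.isLt.trans_le hle⟩) = aj ⟨i.val, i.isLt.trans_le hle⟩ :=
        hy _
      have h2 : (Fin.castLE hk i : Fin n) = Fin.castLE hj ⟨i.val, i.isLt.trans_le hle⟩ := rfl
      rw [h2, h1, ← h i.val i.isLt]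
    exact Set.disjoint_left.mp hdisj hmem hy
  obtain ⟨q, hq, hdiff⟩ := hex
  have key : ∀ q' (hq' : q' < dk),
      ak ⟨q', hq'⟩ ≠ aj ⟨q', hq'.trans_le hle⟩ →
        (⟨q', (hq'.trans_le hle).trans_le hj⟩ : Fin n) = pp := by
    intro q' hq' hne
    apply (hiff _).mp
    have hxv : x (⟨q', (hq'.trans_le hle).trans_le hj⟩ : Fin n) = ak ⟨q', hq'⟩ := hx ⟨q', hq'⟩
    have hyv : y (⟨q', (hq'.trans_le hle).trans_le hj⟩ : Fin n) = aj ⟨q', hq'.trans_le hle⟩ :=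
      hy ⟨q', hq'.trans_le hle⟩
    rw [hxv, hyv]; exact hne
  refine ⟨q, hq, fun q' hq' => ⟨fun hne => ?_, fun he => ?_⟩⟩
  · have h1 := key q' hq' hne
    have h2 := key q hq hdiff
    have h3 := h1.trans h2.symm
    exact congrArg Fin.val h3
  · subst he; exact hdiff

theorem stmt8 {n : ℕ} {ι : Type} (dm : ι → ℕ) (hdm : ∀ i, dm i ≤ n)
    (a : ∀ i, Fin (dm i) → Bool)
    (hdisj : Pairwise fun i j =>
      Disjoint (specialCube (dm i) (hdm i) (a i)) (specialCube (dm j) (hdm j) (a j)))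
    (j : ι) :
    {k : ι | k ≠ j ∧ dm k ≤ dm j ∧
      cubesAdjacent (specialCube (dm k) (hdm k) (a k))
        (specialCube (dm j) (hdm j) (a j))}.ncard ≤ dm j := by
  classical
  set S : Set ι := {k : ι | k ≠ j ∧ dm k ≤ dm j ∧
      cubesAdjacent (specialCube (dm k) (hdm k) (a k))
        (specialCube (dm j) (hdm j) (a j))} with hS
  have hspec : ∀ k ∈ S, ∃ p, p < dm k ∧ ∀ q (hq : q < dm k) (hqj : q < dm j),
      (a k ⟨q, hq⟩ ≠ a j ⟨q, hqj⟩ ↔ q = p) := by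
    intro k hk
    obtain ⟨hkj, hle, hadj⟩ := hk
    obtain ⟨p, hp, hiff⟩ := diff_spec (hdm k) (hdm j) hle (hdisj hkj) hadj
    exact ⟨p, hp, fun q hq _ => hiff q hq⟩
  choose! f hf1 hf2 using hspec
  have hmaps : ∀ k ∈ S, f k ∈ ↑(Finset.range (dm j)) := by
    intro k hk
    exact Finset.mem_coe.mpr (Finset.mem_range.mpr (lt_of_lt_of_le (hf1 k hk) hk.2.1))
  have hinj : Set.InjOn f S := by
    intro k hk k' hk' hfe
    by_contra hne
    have hdkk' : Disjoint (specialCube (dm k) (hdm k) (a k))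
        (specialCube (dm k') (hdm k') (a k')) := hdisj hne
    set p := f k with hp
    have hpk : p < dm k := hf1 k hk
    have hpk' : p < dm k' := hfe ▸ hf1 k' hk'
    have hpj : p < dm j := lt_of_lt_of_le hpk hk.2.1
    -- the common point
    set x : Fin n → Bool := fun l =>
      if h : l.val < dm j then
        (if l.val = p then !(a j ⟨l.val, h⟩) else a j ⟨l.val, h⟩)
      else false with hxdef
    have hmem : ∀ (m : ι) (hm : m ∈ S), f m = p → x ∈ specialCube (dm m) (hdm m) (a m) := by
      intro m hm hfm i
      have hi : i.val < dm j := lt_of_lt_of_le i.isLt hm.2.1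
      have hxi : x (Fin.castLE (hdm m) i) =
          if i.val = p then !(a j ⟨i.val, hi⟩) else a j ⟨i.val, hi⟩ := dif_pos hi
      rw [hxi]
      by_cases hip : i.val = p
      · rw [if_pos hip]
        have hd := (hf2 m hm i.val i.isLt hi).mpr (hip.trans hfm.symm)
        have hmi : (⟨i.val, i.isLt⟩ : Fin (dm m)) = i := rfl
        rw [hmi] at hd
        revert hd
        cases a m i <;> cases a j ⟨i.val, hi⟩ <;> simp
      · rw [if_neg hip]
        have hd : a m ⟨i.val, i.isLt⟩ = a j ⟨i.val, hi⟩ := by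
          by_contra hcon
          exact hip (((hf2 m hm i.val i.isLt hi).mp hcon).trans hfm)
        have hmi : (⟨i.val, i.isLt⟩ : Fin (dm m)) = i := rfl
        rw [hmi] at hd
        exact hd.symm
    have h1 := hmem k hk rfl
    have h2 := hmem k' hk' hfe.symm
    exact Set.disjoint_left.mp hdkk' h1 h2
  calc S.ncard ≤ (↑(Finset.range (dm j)) : Set ℕ).ncard :=
        Set.ncard_le_ncard_of_injOn f hmaps hinj (Finset.finite_toSet _)
    _ = dm j := by rw [Set.ncard_coe_finset, Finset.card_range]
end
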